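/- arXiv:1005.4885 — 3 statements merged into one kernel-verified Lean document; each statement's English description precedes it below -/
import Mathlib

section
/- Let n ≥ 3 and q > n/(n-2). Then there exists c > 0 such that the function u(x) = c(1 + |x|²)^{-1/(q-1)} is a smooth positive supersolution of -Δu = u^q in all of ℝⁿ, i.e., -Δu(x) ≥ u(x)^q for all x ∈ ℝⁿ. -/
noncomputable def lap {n : ℕ} (u : EuclideanSpace ℝ (Fin n) → ℝ)
    (x : EuclideanSpace ℝ (Fin n)) : ℝ :=
  ∑ i : Fin n,
    fderiv ℝ (fun y => fderiv ℝ u y (EuclideanSpace.single i 1)) x (EuclideanSpace.single i 1)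

lemma sum_sq (n : ℕ) (x : EuclideanSpace ℝ (Fin n)) : ∑ i, (x i)^2 = ‖x‖^2 := by
  rw [EuclideanSpace.norm_eq, Real.sq_sqrt (by positivity)]
  simp [sq_abs]

lemma hw (n : ℕ) (y : EuclideanSpace ℝ (Fin n)) :
    HasFDerivAt (fun z : EuclideanSpace ℝ (Fin n) => 1 + ‖z‖^2) (2 • innerSL ℝ y) y :=
  ((hasStrictFDerivAt_norm_sq y).hasFDerivAt).const_add 1

lemma lap_eq (n : ℕ) (c p : ℝ) (x : EuclideanSpace ℝ (Fin n)) :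
    lap (fun y => c * (1 + ‖y‖^2)^p) x
      = 2*c*p*((n : ℝ) * (1+‖x‖^2)^(p-1) + 2*(p-1)*(1+‖x‖^2)^(p-2) * ‖x‖^2) := by
  have hS : ∀ y : EuclideanSpace ℝ (Fin n), (0:ℝ) < 1 + ‖y‖^2 := fun y => by positivity
  have hu : ∀ y : EuclideanSpace ℝ (Fin n),
      HasFDerivAt (fun z : EuclideanSpace ℝ (Fin n) => c * (1+‖z‖^2)^p)
        (c • ((p * (1+‖y‖^2)^(p-1)) • ((2:ℕ) • innerSL ℝ y))) y :=
    fun y => ((hw n y).rpow_const (Or.inl (hS y).ne')).const_mul c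
  have hfd : ∀ (y : EuclideanSpace ℝ (Fin n)) (i : Fin n),
      fderiv ℝ (fun z : EuclideanSpace ℝ (Fin n) => c * (1+‖z‖^2)^p) y (EuclideanSpace.single i 1)
        = (2*c*p) * ((1+‖y‖^2)^(p-1) * y i) := by
    intro y i
    rw [(hu y).fderiv]
    simp [real_inner_comm, EuclideanSpace.inner_single_left, EuclideanSpace.inner_single_right]
    ring
  have key : ∀ i : Fin n,
      fderiv ℝ (fun y => fderiv ℝ (fun z : EuclideanSpace ℝ (Fin n) => c * (1+‖z‖^2)^p) y
          (EuclideanSpace.single i 1)) x (EuclideanSpace.single i 1)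
        = 2*c*p*((1+‖x‖^2)^(p-1) + (p-1)*(1+‖x‖^2)^(p-2)*(2*(x i)^2)) := by
    intro i
    have hfe : (fun y : EuclideanSpace ℝ (Fin n) => fderiv ℝ
          (fun z : EuclideanSpace ℝ (Fin n) => c * (1+‖z‖^2)^p) y (EuclideanSpace.single i 1))
        = fun y : EuclideanSpace ℝ (Fin n) => (2*c*p) * ((1+‖y‖^2)^(p-1) * y i) :=
      funext fun y => hfd y i
    rw [hfe]
    have hA : HasFDerivAt (fun y : EuclideanSpace ℝ (Fin n) => (1+‖y‖^2)^(p-1))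
        (((p-1) * (1+‖x‖^2)^(p-1-1)) • ((2:ℕ) • innerSL ℝ x)) x :=
      (hw n x).rpow_const (Or.inl (hS x).ne')
    have hB : HasFDerivAt (fun y : EuclideanSpace ℝ (Fin n) => y i)
        (EuclideanSpace.proj (𝕜 := ℝ) i) x := by
      exact (EuclideanSpace.proj (𝕜 := ℝ) i).hasFDerivAt
    have hG : HasFDerivAt (fun y : EuclideanSpace ℝ (Fin n) => (2*c*p) * ((1+‖y‖^2)^(p-1) * y i)) _ x :=
      (hA.mul hB).const_mul (2*c*p)
    rw [hG.fderiv]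
    have hx1 : (EuclideanSpace.single i (1:ℝ)) i = 1 := by
      simp [EuclideanSpace.single_apply]
    simp [EuclideanSpace.inner_single_left, EuclideanSpace.inner_single_right, hx1, real_inner_comm]
    ring_nf
  unfold lap
  rw [Finset.sum_congr rfl (fun i _ => key i)]
  rw [← Finset.mul_sum]
  have h2 : ∑ i : Fin n, ((1+‖x‖^2)^(p-1) + (p-1)*(1+‖x‖^2)^(p-2)*(2*(x i)^2))
      = (n:ℝ)*(1+‖x‖^2)^(p-1) + 2*(p-1)*(1+‖x‖^2)^(p-2)*‖x‖^2 := by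
    rw [Finset.sum_add_distrib, Finset.sum_const, Finset.card_univ, Fintype.card_fin,
      nsmul_eq_mul, ← sum_sq n x, Finset.mul_sum]
    congr 1
    exact Finset.sum_congr rfl fun i _ => by ring
  rw [h2]

theorem stmt_0 (n : ℕ) (hn : 3 ≤ n) (q : ℝ) (hq : (n : ℝ) / ((n : ℝ) - 2) < q) :
    ∃ c : ℝ, 0 < c ∧
      ContDiff ℝ (⊤ : ℕ∞) (fun x : EuclideanSpace ℝ (Fin n) =>
        c * (1 + ‖x‖ ^ 2) ^ (-(1 / (q - 1)))) ∧
      ∀ x : EuclideanSpace ℝ (Fin n),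
        0 < c * (1 + ‖x‖ ^ 2) ^ (-(1 / (q - 1))) ∧
        (c * (1 + ‖x‖ ^ 2) ^ (-(1 / (q - 1)))) ^ q ≤
          -lap (fun y : EuclideanSpace ℝ (Fin n) =>
            c * (1 + ‖y‖ ^ 2) ^ (-(1 / (q - 1)))) x := by
  have hn2 : (2:ℝ) < (n:ℝ) := by exact_mod_cast by omega
  have hq1 : 1 < q := lt_trans ((one_lt_div (by linarith)).mpr (by linarith)) hq
  have hq0 : 0 < q - 1 := by linarith
  set α : ℝ := 1/(q-1) with hαdef
  have hα : 0 < α := by positivity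
  have hinv : (q-1) * α = 1 := by rw [hαdef]; field_simp
  have h1 : (n:ℝ) < q*((n:ℝ)-2) := by
    have := (div_lt_iff₀ (by linarith : (0:ℝ) < (n:ℝ)-2)).mp hq
    linarith
  have h2 : (2:ℝ) < (q-1)*((n:ℝ)-2) := by nlinarith
  have hαn : 2*α < (n:ℝ) - 2 := by
    calc 2*α < ((q-1)*((n:ℝ)-2))*α := by
          exact mul_lt_mul_of_pos_right h2 hα
    _ = ((n:ℝ)-2)*((q-1)*α) := by ring
    _ = (n:ℝ)-2 := by rw [hinv, mul_one]
  set K : ℝ := 2*α*((n:ℝ)-2*α-2) with hKdef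
  have hK : 0 < K := by
    apply mul_pos (by positivity)
    linarith
  refine ⟨min 1 (K ^ (1/(q-1))), lt_min one_pos (Real.rpow_pos_of_pos hK _), ?_, ?_⟩
  · apply contDiff_const.mul
    rw [contDiff_iff_contDiffAt]
    intro x
    exact (Real.contDiffAt_rpow_const_of_ne (by positivity)).comp x
      ((contDiff_const.add (contDiff_norm_sq ℝ)).contDiffAt)
  · intro x
    set c : ℝ := min 1 (K ^ (1/(q-1))) with hcdef
    have hc : 0 < c := lt_min one_pos (Real.rpow_pos_of_pos hK _)
    have hS : (0:ℝ) < 1 + ‖x‖^2 := by positivity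
    constructor
    · exact mul_pos hc (Real.rpow_pos_of_pos hS _)
    · have hcK : c ^ (q-1) ≤ K := by
        calc c^(q-1) ≤ (K^(1/(q-1)))^(q-1) :=
              Real.rpow_le_rpow hc.le (min_le_right _ _) hq0.le
        _ = K := by
            rw [← Real.rpow_mul hK.le, one_div_mul_cancel hq0.ne', Real.rpow_one]
      set p : ℝ := -(1/(q-1)) with hpdef
      have hpα : p = -α := rfl
      have hlap := lap_eq n c p x
      rw [hlap]
      have hpq : p * q = p - 1 := by
        rw [hpdef]
        field_simp
        ring
      have hLHS : (c * (1+‖x‖^2)^p)^q = c^q * (1+‖x‖^2)^(p-1) := by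
        rw [Real.mul_rpow hc.le (Real.rpow_pos_of_pos hS p).le,
          ← Real.rpow_mul hS.le, hpq]
      rw [hLHS]
      have hcq : c ^ q ≤ c * K := by
        have h3 : c ^ q = c^(q-1) * c := by
          rw [Real.rpow_sub hc, Real.rpow_one, div_mul_cancel₀ _ hc.ne']
        rw [h3, mul_comm c K]
        exact mul_le_mul_of_nonneg_right hcK hc.le
      have hstep : c^q * (1+‖x‖^2)^(p-1) ≤ (c*K) * (1+‖x‖^2)^(p-1) :=
        mul_le_mul_of_nonneg_right hcq (Real.rpow_nonneg hS.le _)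
      refine le_trans hstep ?_
      have hsplit : (1+‖x‖^2)^(p-1) = (1+‖x‖^2)^(p-2) * (1+‖x‖^2) := by
        rw [← Real.rpow_add_one hS.ne' (p-2)]
        congr 1
        ring
      rw [hsplit, hKdef, hpα]
      have hA : (0:ℝ) < (1+‖x‖^2)^(p-2) := Real.rpow_pos_of_pos hS _
      have ht : (0:ℝ) ≤ ‖x‖^2 := sq_nonneg _
      nlinarith [mul_pos (mul_pos hc hα) hA, mul_pos (mul_pos (mul_pos hc hα) hα) hA]
end

section
/- For every a > 0, the function u(x) = (2/a)(log|x| + log(log|x|)) is a smooth positive solution of -Δu = (2/a) e^{-a u} in ℝ² \ B₃, where B₃ is the ball of radius 3 centered at the origin. -/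
noncomputable def Gf (c t : ℝ) : ℝ := c * ((1/2) * Real.log t + Real.log ((1/2) * Real.log t))
noncomputable def g1 (c t : ℝ) : ℝ := c * (1 / (2 * t) + 1 / (t * Real.log t))
noncomputable def g2 (c t : ℝ) : ℝ :=
  c * (-(2 / (2 * t) ^ 2) - (Real.log t + 1) / (t * Real.log t) ^ 2)

lemma log_gt_one {t : ℝ} (ht : 9 < t) : 1 < Real.log t := by
  have := Real.exp_one_lt_d9
  calc (1:ℝ) = Real.log (Real.exp 1) := (Real.log_exp 1).symm
  _ < Real.log t := Real.log_lt_log (Real.exp_pos 1) (by linarith)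

lemma hG (c t : ℝ) (ht : 9 < t) : HasDerivAt (Gf c) (g1 c t) t := by
  have ht0 : (0:ℝ) < t := by linarith
  have hlt : 1 < Real.log t := log_gt_one ht
  have h1 : HasDerivAt Real.log t⁻¹ t := Real.hasDerivAt_log ht0.ne'
  have h2 : HasDerivAt (fun s => (1/2) * Real.log s) ((1/2) * t⁻¹) t := h1.const_mul _
  have h3 : HasDerivAt (fun s => Real.log ((1/2) * Real.log s))
      (((1/2) * Real.log t)⁻¹ * ((1/2) * t⁻¹)) t := by
    have := (Real.hasDerivAt_log (x := (1/2) * Real.log t) (by positivity)).comp t h2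
    exact this
  have := ((h2.add h3).const_mul c)
  refine this.congr_deriv ?_
  unfold g1
  have hl0 : Real.log t ≠ 0 := by positivity
  field_simp

lemma hg1d (c t : ℝ) (ht : 9 < t) : HasDerivAt (g1 c) (g2 c t) t := by
  have ht0 : (0:ℝ) < t := by linarith
  have hlt : 1 < Real.log t := log_gt_one ht
  have hl0 : (0:ℝ) < Real.log t := by linarith
  have h1 : HasDerivAt (fun s : ℝ => 2 * s) 2 t := by
    simpa using (hasDerivAt_id t).const_mul 2
  have h2 : HasDerivAt (fun s : ℝ => 1 / (2 * s)) ((0 * (2*t) - 1 * 2)/(2*t)^2) t :=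
    (hasDerivAt_const t 1).div h1 (by positivity)
  have h3 : HasDerivAt (fun s : ℝ => s * Real.log s) (1 * Real.log t + t * t⁻¹) t :=
    (hasDerivAt_id t).mul (Real.hasDerivAt_log ht0.ne')
  have h4 : HasDerivAt (fun s : ℝ => 1 / (s * Real.log s))
      ((0 * (t * Real.log t) - 1 * (1 * Real.log t + t * t⁻¹)) / (t * Real.log t)^2) t :=
    (hasDerivAt_const t 1).div h3 (by positivity)
  have := (h2.add h4).const_mul c
  refine this.congr_deriv ?_
  unfold g2
  field_simp
  ring

theorem stmt_2 (a : ℝ) (ha : 0 < a) :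
    ContDiffOn ℝ (⊤ : ℕ∞)
      (fun x : EuclideanSpace ℝ (Fin 2) => (2 / a) * (Real.log ‖x‖ + Real.log (Real.log ‖x‖)))
      {x : EuclideanSpace ℝ (Fin 2) | 3 < ‖x‖} ∧
    ∀ x : EuclideanSpace ℝ (Fin 2), 3 < ‖x‖ →
      0 < (2 / a) * (Real.log ‖x‖ + Real.log (Real.log ‖x‖)) ∧
      -lap (fun y : EuclideanSpace ℝ (Fin 2) =>
          (2 / a) * (Real.log ‖y‖ + Real.log (Real.log ‖y‖))) x =
        (2 / a) * Real.exp (-a * ((2 / a) * (Real.log ‖x‖ + Real.log (Real.log ‖x‖)))) := by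
  set c : ℝ := 2 / a with hc
  have hcpos : 0 < c := by positivity
  set u : EuclideanSpace ℝ (Fin 2) → ℝ :=
    fun x => c * (Real.log ‖x‖ + Real.log (Real.log ‖x‖)) with hu
  set S : Set (EuclideanSpace ℝ (Fin 2)) := {x | 3 < ‖x‖} with hSdef
  have hSopen : IsOpen S := isOpen_lt continuous_const continuous_norm
  -- basic facts at points of S
  have hnorm_pos : ∀ x ∈ S, (0:ℝ) < ‖x‖ := fun x hx => by
    have : (3:ℝ) < ‖x‖ := hx; linarith
  have hlog_gt : ∀ x ∈ S, (1:ℝ) < Real.log ‖x‖ := by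
    intro x hx
    have h3 : (3:ℝ) < ‖x‖ := hx
    have := Real.exp_one_lt_d9
    calc (1:ℝ) = Real.log (Real.exp 1) := (Real.log_exp 1).symm
    _ < Real.log ‖x‖ := Real.log_lt_log (Real.exp_pos 1) (by linarith)
  have ht9 : ∀ x ∈ S, (9:ℝ) < ‖x‖^2 := by
    intro x hx
    have h3 : (3:ℝ) < ‖x‖ := hx
    nlinarith
  -- u coincides with Gf c ∘ ‖·‖² on S
  have heq : ∀ y ∈ S, u y = Gf c (‖y‖^2) := by
    intro y hy
    have h0 : (0:ℝ) < ‖y‖ := hnorm_pos y hy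
    have hlogsq : Real.log (‖y‖^2) = 2 * Real.log ‖y‖ := by
      rw [Real.log_pow]; push_cast; ring
    unfold Gf
    rw [hlogsq]
    ring_nf
    simp only [hu]
    ring
  -- first derivative on S
  have hfder : ∀ x ∈ S, HasFDerivAt u (g1 c (‖x‖^2) • (2 • (innerSL ℝ x))) x := by
    intro x hx
    have hcomp : HasFDerivAt (fun y => Gf c (‖y‖^2)) (g1 c (‖x‖^2) • (2 • (innerSL ℝ x))) x :=
      (hG c _ (ht9 x hx)).comp_hasFDerivAt (h₂ := Gf c) (f := fun y => ‖y‖^2) x (hasStrictFDerivAt_norm_sq x).hasFDerivAt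
    exact hcomp.congr_of_eventuallyEq
      (Filter.eventuallyEq_of_mem (hSopen.mem_nhds hx) heq)
  have hfder_app : ∀ i : Fin 2, ∀ x ∈ S,
      fderiv ℝ u x (EuclideanSpace.single i 1) = g1 c (‖x‖^2) * (2 * x i) := by
    intro i x hx
    rw [(hfder x hx).fderiv]
    simp [EuclideanSpace.inner_single_right, mul_comm]
  -- second derivative
  have hsecond : ∀ i : Fin 2, ∀ x ∈ S,
      fderiv ℝ (fun y => fderiv ℝ u y (EuclideanSpace.single i 1)) x (EuclideanSpace.single i 1)
        = 2 * g1 c (‖x‖^2) + 4 * g2 c (‖x‖^2) * (x i)^2 := by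
    intro i x hx
    have hphi : HasFDerivAt (fun y : EuclideanSpace ℝ (Fin 2) => g1 c (‖y‖^2))
        (g2 c (‖x‖^2) • (2 • (innerSL ℝ x))) x := by
      have hcomp := (hg1d c _ (ht9 x hx)).comp_hasFDerivAt x
        (hasStrictFDerivAt_norm_sq x).hasFDerivAt
      exact hcomp
    have hpsi : HasFDerivAt (fun y : EuclideanSpace ℝ (Fin 2) => 2 * y i)
        (((2:ℝ)) • (EuclideanSpace.proj i : EuclideanSpace ℝ (Fin 2) →L[ℝ] ℝ)) x := by
      exact ((EuclideanSpace.proj i :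
        EuclideanSpace ℝ (Fin 2) →L[ℝ] ℝ).hasFDerivAt (x := x)).const_mul (2:ℝ)
    have hmul := hphi.mul hpsi
    have hcongr : fderiv ℝ (fun y => fderiv ℝ u y (EuclideanSpace.single i 1)) x
        = fderiv ℝ (fun y => g1 c (‖y‖^2) * (2 * y i)) x := by
      apply Filter.EventuallyEq.fderiv_eq
      exact Filter.eventuallyEq_of_mem (hSopen.mem_nhds hx) (fun y hy => hfder_app i y hy)
    rw [hcongr, show fderiv ℝ (fun y => g1 c (‖y‖^2) * (2 * y i)) x = _ from hmul.fderiv]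
    fin_cases i <;>
      simp [EuclideanSpace.inner_single_right, EuclideanSpace.single_apply] <;> ring
  refine ⟨?_, ?_⟩
  · -- smoothness
    intro x hx
    have h0 : ‖x‖ ≠ 0 := (hnorm_pos x hx).ne'
    have hl : Real.log ‖x‖ ≠ 0 := by
      have := hlog_gt x hx; linarith
    have h1 : ContDiffAt ℝ (⊤ : ℕ∞) (fun y : EuclideanSpace ℝ (Fin 2) => ‖y‖) x :=
      contDiffAt_norm (𝕜 := ℝ) (by simpa using (hnorm_pos x hx).ne')
    exact (((contDiffAt_const (c := c)).mul
      ((h1.log h0).add ((h1.log h0).log hl))).contDiffWithinAt)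
  · intro x hx
    have hx' : x ∈ S := hx
    have h3 : (3:ℝ) < ‖x‖ := hx
    have h0 : (0:ℝ) < ‖x‖ := hnorm_pos x hx'
    have hL : (1:ℝ) < Real.log ‖x‖ := hlog_gt x hx'
    have hL0 : (0:ℝ) < Real.log ‖x‖ := by linarith
    constructor
    · have : 0 < Real.log ‖x‖ + Real.log (Real.log ‖x‖) := by
        have : 0 < Real.log (Real.log ‖x‖) := Real.log_pos hL
        linarith
      exact mul_pos hcpos this
    · -- compute lap
      have hlap : lap u x = ∑ i : Fin 2, (2 * g1 c (‖x‖^2) + 4 * g2 c (‖x‖^2) * (x i)^2) := by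
        unfold lap
        exact Finset.sum_congr rfl (fun i _ => hsecond i x hx')
      have hsum : ∑ i : Fin 2, (x i)^2 = ‖x‖^2 := by
        rw [EuclideanSpace.norm_eq, Real.sq_sqrt (by positivity)]
        simp [sq_abs]
      have hlap2 : lap u x = 4 * g1 c (‖x‖^2) + 4 * g2 c (‖x‖^2) * ‖x‖^2 := by
        rw [hlap, Finset.sum_add_distrib, Finset.sum_const]
        rw [← Finset.mul_sum, hsum]
        simp [Fin.sum_univ_two]
        ring
      -- exponential simplification
      set r := ‖x‖
      set L := Real.log r
      have hexp : Real.exp (-a * (c * (L + Real.log L))) = (r^2 * L^2)⁻¹ := by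
        have harg : -a * (c * (L + Real.log L)) = (-(L + L)) + (-(Real.log L + Real.log L)) := by
          rw [hc]; field_simp; ring
        rw [harg, Real.exp_add, Real.exp_neg, Real.exp_neg, Real.exp_add, Real.exp_add,
          Real.exp_log h0, Real.exp_log hL0]
        ring
      show -lap u x = c * Real.exp (-a * (c * (L + Real.log L)))
      rw [hexp, hlap2]
      unfold g1 g2
      have hlogsq : Real.log (r^2) = 2 * L := by
        rw [Real.log_pow]; push_cast; ring
      rw [hlogsq]
      have hr0 : r ≠ 0 := h0.ne'
      have hL0' : L ≠ 0 := hL0.ne'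
      field_simp
      ring
end

section
/- Let n ≥ 3, k ≥ 1, σ₁,…,σ_k > 0, p = 2, and suppose D := σ₁⋯σ_k − 1 > 0. Suppose positive functions m₁,…,m_k on (r₀,∞) satisfy m_{i+1}(r) ≥ c r² m_i(r)^{σ_i} for all i (indices mod k) and all large r, and that m₁ is bounded above. Then m₁(r) ≤ C r^{-A/(B-1)} for large r, where B = σ₁σ₂⋯σ_k and A = 2(1 + σ_k + σ_kσ_{k-1} + ⋯ + σ_kσ_{k-1}⋯σ₂). -/
/-!
Composing the k inequalities `c r² mᵢ^σᵢ ≤ mᵢ₊₁` around the cycle gives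
`(c r²)^S m₁^B ≤ m₁` with `S = 1 + σ_k + σ_kσ_{k-1} + ⋯` and `B = σ₁⋯σ_k`, so `A = 2S`.
Since `B > 1`, dividing by `m₁` yields `m₁^(B-1) ≤ (c r²)^(-S)`, i.e. `m₁ ≤ c^(-S/(B-1)) r^(-A/(B-1))`.
-/

open Finset

/-- The exponent of the constant after composing the first `j` steps of the chain:
`1 + σ j + σ j σ (j-1) + ⋯ + σ j ⋯ σ 2`. -/
noncomputable def chainWeight (σ : ℕ → ℝ) (j : ℕ) : ℝ :=
  ∑ i ∈ range j, ∏ l ∈ range i, σ (j - l)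

lemma chainWeight_succ (σ : ℕ → ℝ) (j : ℕ) :
    chainWeight σ (j + 1) = 1 + σ (j + 1) * chainWeight σ j := by
  have hprod (i : ℕ) : ∏ l ∈ range (i + 1), σ (j + 1 - l) = σ (j + 1) * ∏ l ∈ range i, σ (j - l) := by
    rw [prod_range_succ']
    simp only [Nat.sub_zero, mul_comm, Nat.add_sub_add_right]
  simp only [chainWeight, sum_range_succ' _ j, hprod, ← mul_sum, prod_range_zero]
  ring

lemma chainWeight_eq_one_add (σ : ℕ → ℝ) {j : ℕ} (hj : 1 ≤ j) :
    chainWeight σ j = 1 + ∑ i ∈ range (j - 1), ∏ l ∈ range (i + 1), σ (j - l) := by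
  obtain ⟨j, rfl⟩ := Nat.exists_eq_add_of_le' hj
  rw [chainWeight, sum_range_succ', Nat.add_sub_cancel, prod_range_zero, add_comm]

lemma rpow_chainWeight_mul_le_of_chain {a : ℝ} (ha : 0 < a) {σ x : ℕ → ℝ} (hx : 0 ≤ x 1) :
    ∀ j : ℕ, (∀ i ∈ Icc 1 j, 0 ≤ σ i) → (∀ i ∈ Icc 1 j, a * x i ^ σ i ≤ x (i + 1)) →
      a ^ chainWeight σ j * x 1 ^ ∏ i ∈ range j, σ (i + 1) ≤ x (j + 1)
  | 0, _, _ => by simp [chainWeight]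
  | j + 1, hσ, hchain => by
    have hmem : j + 1 ∈ Icc 1 (j + 1) := by simp
    have hsub : Icc 1 j ⊆ Icc 1 (j + 1) := Icc_subset_Icc_right j.le_succ
    have ih := rpow_chainWeight_mul_le_of_chain ha hx j
      (fun i hi => hσ i (hsub hi)) (fun i hi => hchain i (hsub hi))
    calc a ^ chainWeight σ (j + 1) * x 1 ^ ∏ i ∈ range (j + 1), σ (i + 1)
        = a * (a ^ chainWeight σ j * x 1 ^ ∏ i ∈ range j, σ (i + 1)) ^ σ (j + 1) := by
          rw [chainWeight_succ, prod_range_succ, Real.rpow_add ha, Real.rpow_one,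
            Real.mul_rpow (by positivity) (by positivity), ← Real.rpow_mul ha.le,
            ← Real.rpow_mul hx, mul_comm (σ (j + 1))]
          ring
      _ ≤ a * x (j + 1) ^ σ (j + 1) := by
          gcongr
          exact hσ _ hmem
      _ ≤ x (j + 1 + 1) := hchain _ hmem

lemma le_rpow_of_mul_rpow_le {x t B : ℝ} (hx : 0 < x) (ht : 0 < t) (hB : 1 < B)
    (h : t * x ^ B ≤ x) : x ≤ t ^ (-(B - 1)⁻¹) := by
  rw [Real.rpow_neg ht.le, ← Real.inv_rpow ht.le,
    Real.le_rpow_inv_iff_of_pos hx.le (inv_nonneg.2 ht.le) (sub_pos.2 hB),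
    Real.rpow_sub hx, Real.rpow_one, div_le_iff₀ hx, ← div_eq_inv_mul, le_div_iff₀ ht]
  linarith

theorem stmt_19_general (k : ℕ) (hk : 1 ≤ k)
    (σ : ℕ → ℝ) (hσ : ∀ i ∈ Finset.Icc 1 k, 0 < σ i)
    (hD : 0 < (∏ i ∈ Finset.range k, σ (i + 1)) - 1)
    (r₀ r₁ c : ℝ) (hr₀ : 0 < r₀) (hr₁ : r₀ < r₁) (hc : 0 < c)
    (m : ℕ → ℝ → ℝ)
    (hcyc : ∀ r : ℝ, m (k + 1) r = m 1 r)
    (hmpos : ∀ i ∈ Finset.Icc 1 k, ∀ r : ℝ, r₀ < r → 0 < m i r)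
    (hchain : ∀ i ∈ Finset.Icc 1 k, ∀ r : ℝ, r₁ ≤ r →
      c * r ^ 2 * m i r ^ σ i ≤ m (i + 1) r) :
    let B : ℝ := ∏ i ∈ Finset.range k, σ (i + 1)
    let A : ℝ := 2 * (1 + ∑ i ∈ Finset.range (k - 1), ∏ l ∈ Finset.range (i + 1), σ (k - l))
    ∃ C r₂ : ℝ, 0 < C ∧ r₁ ≤ r₂ ∧ ∀ r : ℝ, r₂ ≤ r →
      m 1 r ≤ C * r ^ (-(A / (B - 1))) := by
  intro B A
  have hA : A = 2 * chainWeight σ k := by rw [chainWeight_eq_one_add σ hk]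
  have hB : 1 < B := sub_pos.1 hD
  refine ⟨c ^ (-(chainWeight σ k / (B - 1))), r₁, by positivity, le_rfl, fun r hr => ?_⟩
  have hr_pos : 0 < r := by linarith
  have hm : 0 < m 1 r := hmpos 1 (by simp [hk]) r (by linarith)
  have hcycle : (c * r ^ 2) ^ chainWeight σ k * m 1 r ^ B ≤ m 1 r := by
    simpa only [hcyc r] using rpow_chainWeight_mul_le_of_chain (by positivity) hm.le k
      (fun i hi => (hσ i hi).le) (fun i hi => hchain i hi r hr)
  calc m 1 r ≤ ((c * r ^ 2) ^ chainWeight σ k) ^ (-(B - 1)⁻¹) :=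
        le_rpow_of_mul_rpow_le hm (by positivity) hB hcycle
    _ = c ^ (-(chainWeight σ k / (B - 1))) * r ^ (-(A / (B - 1))) := by
        rw [← Real.rpow_mul (by positivity), Real.mul_rpow hc.le (by positivity),
          ← Real.rpow_natCast_mul hr_pos.le, hA]
        congr 2 <;> push_cast <;> ring

theorem stmt_19 (n : ℕ) (hn : 3 ≤ n) (k : ℕ) (hk : 1 ≤ k)
    (σ : ℕ → ℝ) (hσ : ∀ i ∈ Finset.Icc 1 k, 0 < σ i)
    (hD : 0 < (∏ i ∈ Finset.range k, σ (i + 1)) - 1)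
    (r₀ r₁ c M : ℝ) (hr₀ : 0 < r₀) (hr₁ : r₀ < r₁) (hc : 0 < c) (hM : 0 < M)
    (m : ℕ → ℝ → ℝ)
    (hcyc : ∀ r : ℝ, m (k + 1) r = m 1 r)
    (hmpos : ∀ i ∈ Finset.Icc 1 k, ∀ r : ℝ, r₀ < r → 0 < m i r)
    (hchain : ∀ i ∈ Finset.Icc 1 k, ∀ r : ℝ, r₁ ≤ r →
      c * r ^ 2 * m i r ^ σ i ≤ m (i + 1) r)
    (hbound : ∀ r : ℝ, r₁ ≤ r → m 1 r ≤ M) :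
    let B : ℝ := ∏ i ∈ Finset.range k, σ (i + 1)
    let A : ℝ := 2 * (1 + ∑ i ∈ Finset.range (k - 1), ∏ l ∈ Finset.range (i + 1), σ (k - l))
    ∃ C r₂ : ℝ, 0 < C ∧ r₁ ≤ r₂ ∧ ∀ r : ℝ, r₂ ≤ r →
      m 1 r ≤ C * r ^ (-(A / (B - 1))) :=
  stmt_19_general k hk σ hσ hD r₀ r₁ c hr₀ hr₁ hc m hcyc hmpos hchain
end
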